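/- For the default weight w(t) = 1/(1+t²) − 1 with centered version w̃_{ij}, there exist constants 0 < c ≤ C and an integer N such that for all n ≥ N: c ≤ max_{i,j} |w̃_{ij}| ≤ C, c ≤ max_i Σ_{j=1}^n |w̃_{ij}| ≤ C, c·n ≤ Σ_{i,j} w̃_{ij}² ≤ C·n, and c·n ≤ Σ_{i=1}^n (Σ_{j=1}^n |w̃_{ij}|)² ≤ C·n; that is, w̃₀₊ ≍ w̃₁₊ ≍ 1 and w̃₂₊ ≍ w̃₃₊ ≍ n. -/

import Mathlib

open Finset Filter

/-- The default weight `w(t) = 1/(1+t²) − 1`. -/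
noncomputable def wDefault (t : ℕ) : ℝ := 1 / (1 + (t : ℝ) ^ 2) - 1

/-- `w₁ = Σ_{i≠j} w(|i−j|)` for the default weight. -/
noncomputable def wOne (n : ℕ) : ℝ :=
  ∑ i : Fin n, ∑ j : Fin n,
    if i = j then 0 else wDefault (((i : ℕ) : ℤ) - ((j : ℕ) : ℤ)).natAbs

/-- Centered default weights `w̃_{ij} = w(|i−j|) − w₁·1{i≠j}/(n(n−1))`. -/
noncomputable def wTilde (n : ℕ) (i j : Fin n) : ℝ :=
  wDefault (((i : ℕ) : ℤ) - ((j : ℕ) : ℤ)).natAbs -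
    (if i = j then 0 else wOne n / ((n : ℝ) * ((n : ℝ) - 1)))

/-- `w̃₀₊ = max_{i,j} |w̃_{ij}|`. -/
noncomputable def wZeroPlus (n : ℕ) : ℝ := ⨆ i : Fin n, ⨆ j : Fin n, |wTilde n i j|

/-- `w̃₁₊ = max_i Σ_j |w̃_{ij}|`. -/
noncomputable def wOnePlus (n : ℕ) : ℝ := ⨆ i : Fin n, ∑ j : Fin n, |wTilde n i j|

/-- `w̃₂₊ = Σ_{i,j} w̃_{ij}²`. -/
noncomputable def wTwoPlus (n : ℕ) : ℝ := ∑ i : Fin n, ∑ j : Fin n, (wTilde n i j) ^ 2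

/-- `w̃₃₊ = Σ_i (Σ_j |w̃_{ij}|)²`. -/
noncomputable def wThreePlus (n : ℕ) : ℝ :=
  ∑ i : Fin n, (∑ j : Fin n, |wTilde n i j|) ^ 2

/-!
Off the diagonal, `w̃ᵢⱼ = f(|i−j|) − δₙ` with `f(t) = 1/(1+t²)` and `δₙ` the mean of `f(|i−j|)`
over the `n(n−1)` off-diagonal pairs. Since `f(t) ≤ 3/(t+1) − 3/(t+2)` telescopes, every row sum
`∑ⱼ f(|i−j|)` is at most `6`; hence `δₙ = O(1/n)` and each absolute row sum `∑ⱼ |w̃ᵢⱼ|` is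
bounded. Conversely every row contains a neighbour `j = i ± 1` with `w̃ᵢⱼ = 1/2 − δₙ ≥ 1/4` once `n ≥ 21`.
These two row estimates control all four summaries.
-/

section RowEstimates

variable {ι : Type*} [Fintype ι] {a : ι → ι → ℝ} {b c : ℝ}

lemma abs_le_sum_abs_row (i j : ι) : |a i j| ≤ ∑ k, |a i k| :=
  single_le_sum (f := fun k => |a i k|) (fun _ _ => abs_nonneg _) (mem_univ j)

lemma le_iSup_iSup_abs {i j : ι} (h : c ≤ |a i j|) : c ≤ ⨆ i, ⨆ j, |a i j| :=
  le_ciSup_of_le (Finite.bddAbove_range _) i (le_ciSup_of_le (Finite.bddAbove_range _) j h)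

lemma iSup_iSup_abs_le [Nonempty ι] (hrow : ∀ i, ∑ j, |a i j| ≤ b) :
    ⨆ i, ⨆ j, |a i j| ≤ b :=
  ciSup_le fun i => ciSup_le fun j => (abs_le_sum_abs_row i j).trans (hrow i)

lemma le_iSup_sum_abs {i j : ι} (h : c ≤ |a i j|) : c ≤ ⨆ i, ∑ j, |a i j| :=
  le_ciSup_of_le (Finite.bddAbove_range _) i (h.trans (abs_le_sum_abs_row i j))

lemma iSup_sum_abs_le [Nonempty ι] (hrow : ∀ i, ∑ j, |a i j| ≤ b) : ⨆ i, ∑ j, |a i j| ≤ b :=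
  ciSup_le hrow

lemma sq_mul_card_le_sum_sum_sq (hc : 0 ≤ c) (hlow : ∀ i, ∃ j, c ≤ |a i j|) :
    c ^ 2 * Fintype.card ι ≤ ∑ i, ∑ j, a i j ^ 2 := by
  rw [mul_comm, ← nsmul_eq_mul, ← card_univ]
  refine card_nsmul_le_sum _ _ _ fun i _ => ?_
  obtain ⟨j, hj⟩ := hlow i
  calc c ^ 2 ≤ |a i j| ^ 2 := pow_le_pow_left₀ hc hj 2
    _ = a i j ^ 2 := sq_abs _
    _ ≤ ∑ k, a i k ^ 2 := single_le_sum (f := fun k => a i k ^ 2) (fun _ _ => sq_nonneg _) (mem_univ j)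

lemma sum_sum_sq_le (hrow : ∀ i, ∑ j, |a i j| ≤ b) :
    ∑ i, ∑ j, a i j ^ 2 ≤ b ^ 2 * Fintype.card ι := by
  rw [mul_comm, ← nsmul_eq_mul, ← card_univ]
  refine sum_le_card_nsmul _ _ _ fun i _ => ?_
  calc ∑ j, a i j ^ 2 = ∑ j, |a i j| ^ 2 := by simp only [sq_abs]
    _ ≤ (∑ j, |a i j|) ^ 2 := sum_sq_le_sq_sum_of_nonneg fun _ _ => abs_nonneg _
    _ ≤ b ^ 2 := pow_le_pow_left₀ (sum_nonneg fun _ _ => abs_nonneg _) (hrow i) 2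

lemma sq_mul_card_le_sum_sq_sum_abs (hc : 0 ≤ c) (hlow : ∀ i, ∃ j, c ≤ |a i j|) :
    c ^ 2 * Fintype.card ι ≤ ∑ i, (∑ j, |a i j|) ^ 2 := by
  rw [mul_comm, ← nsmul_eq_mul, ← card_univ]
  refine card_nsmul_le_sum _ _ _ fun i _ => ?_
  obtain ⟨j, hj⟩ := hlow i
  exact pow_le_pow_left₀ hc (hj.trans (abs_le_sum_abs_row i j)) 2

lemma sum_sq_sum_abs_le (hrow : ∀ i, ∑ j, |a i j| ≤ b) :
    ∑ i, (∑ j, |a i j|) ^ 2 ≤ b ^ 2 * Fintype.card ι := by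
  rw [mul_comm, ← nsmul_eq_mul, ← card_univ]
  exact sum_le_card_nsmul _ _ _ fun i _ =>
    pow_le_pow_left₀ (sum_nonneg fun _ _ => abs_nonneg _) (hrow i) 2

end RowEstimates

noncomputable def invOneAddSq (t : ℕ) : ℝ := 1 / (1 + (t : ℝ) ^ 2)

lemma invOneAddSq_nonneg (t : ℕ) : 0 ≤ invOneAddSq t := by unfold invOneAddSq; positivity

lemma invOneAddSq_zero : invOneAddSq 0 = 1 := by norm_num [invOneAddSq]

lemma invOneAddSq_one : invOneAddSq 1 = 1 / 2 := by norm_num [invOneAddSq]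

lemma invOneAddSq_le_telescope (t : ℕ) :
    invOneAddSq t ≤ 3 / ((t : ℝ) + 1) - 3 / ((t + 1 : ℕ) + 1) := by
  have ht : (0 : ℝ) ≤ t := t.cast_nonneg
  rw [invOneAddSq, Nat.cast_succ, div_sub_div _ _ (by positivity) (by positivity),
    div_le_div_iff₀ (by positivity) (by positivity)]
  rcases t.eq_zero_or_pos with rfl | ht1
  · norm_num
  · have : (1 : ℝ) ≤ t := by exact_mod_cast ht1
    nlinarith

lemma sum_range_invOneAddSq_le (m : ℕ) : ∑ t ∈ range m, invOneAddSq t ≤ 3 := by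
  calc ∑ t ∈ range m, invOneAddSq t
      ≤ ∑ t ∈ range m, (3 / ((t : ℝ) + 1) - 3 / ((t + 1 : ℕ) + 1)) :=
        sum_le_sum fun t _ => invOneAddSq_le_telescope t
    _ = 3 - 3 / ((m : ℝ) + 1) := by
        rw [sum_range_sub' (fun t : ℕ => 3 / ((t : ℝ) + 1))]; norm_num
    _ ≤ 3 := sub_le_self _ (by positivity)

lemma sum_invOneAddSq_le_of_injOn {ι : Type*} {s : Finset ι} {d : ι → ℕ} (hd : Set.InjOn d s) :
    ∑ j ∈ s, invOneAddSq (d j) ≤ 3 := by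
  rw [← sum_image hd]
  calc ∑ t ∈ s.image d, invOneAddSq t ≤ ∑ t ∈ range ((s.image d).sup id + 1), invOneAddSq t :=
        sum_le_sum_of_subset_of_nonneg
          (fun t ht => mem_range.2 (Nat.lt_succ_of_le (le_sup (f := id) ht)))
          fun t _ _ => invOneAddSq_nonneg t
    _ ≤ 3 := sum_range_invOneAddSq_le _

/-- Points on each side of `x` have distinct distances to `x`, whence the factor `2 · 3`. -/
lemma sum_invOneAddSq_natAbs_sub_le {ι : Type*} {s : Finset ι} {g : ι → ℤ} (hg : Set.InjOn g s)
    (x : ℤ) : ∑ j ∈ s, invOneAddSq (x - g j).natAbs ≤ 6 := by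
  rw [← sum_filter_add_sum_filter_not s (fun j => g j ≤ x)]
  have hleft := sum_invOneAddSq_le_of_injOn (s := s.filter (fun j => g j ≤ x))
    (d := fun j => (x - g j).natAbs) fun j hj k hk hjk => by
      simp only [coe_filter, Set.mem_ofPred_eq] at hj hk hjk
      exact hg hj.1 hk.1 (by omega)
  have hright := sum_invOneAddSq_le_of_injOn (s := s.filter (fun j => ¬ g j ≤ x))
    (d := fun j => (x - g j).natAbs) fun j hj k hk hjk => by
      simp only [coe_filter, Set.mem_ofPred_eq] at hj hk hjk
      exact hg hj.1 hk.1 (by omega)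
  linarith

lemma sum_invOneAddSq_dist_le {n : ℕ} (i : Fin n) :
    ∑ j : Fin n, invOneAddSq (((i : ℕ) : ℤ) - ((j : ℕ) : ℤ)).natAbs ≤ 6 :=
  sum_invOneAddSq_natAbs_sub_le (fun j _ k _ h => Fin.ext (by exact_mod_cast h)) _

lemma sum_erase_invOneAddSq_dist_le {n : ℕ} (i : Fin n) :
    ∑ j ∈ univ.erase i, invOneAddSq (((i : ℕ) : ℤ) - ((j : ℕ) : ℤ)).natAbs ≤ 5 := by
  have := sum_invOneAddSq_dist_le i
  rw [← add_sum_erase _ _ (mem_univ i), sub_self, Int.natAbs_zero, invOneAddSq_zero] at this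
  linarith

lemma wDefault_eq (t : ℕ) : wDefault t = invOneAddSq t - 1 := rfl

/-- `δₙ`, the off-diagonal mean of `f(|i−j|)` (see `centering_eq`). -/
noncomputable def centering (n : ℕ) : ℝ := 1 + wOne n / (n * (n - 1))

lemma wTilde_of_ne {n : ℕ} {i j : Fin n} (h : i ≠ j) :
    wTilde n i j = invOneAddSq (((i : ℕ) : ℤ) - ((j : ℕ) : ℤ)).natAbs - centering n := by
  rw [wTilde, if_neg h, wDefault_eq, centering]
  ring

lemma wOne_eq (n : ℕ) :
    wOne n = ∑ i : Fin n, ∑ j ∈ univ.erase i, invOneAddSq (((i : ℕ) : ℤ) - ((j : ℕ) : ℤ)).natAbs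
      - n * (n - 1) := by
  have hrow : ∀ i : Fin n, ∑ j ∈ univ.erase i, wDefault (((i : ℕ) : ℤ) - ((j : ℕ) : ℤ)).natAbs
      = ∑ j ∈ univ.erase i, invOneAddSq (((i : ℕ) : ℤ) - ((j : ℕ) : ℤ)).natAbs - (n - 1) := by
    intro i
    simp only [wDefault_eq, sum_sub_distrib, sum_const, card_erase_of_mem (mem_univ i), card_univ,
      Fintype.card_fin, nsmul_eq_mul, mul_one, Nat.cast_pred i.pos]
  simp only [wOne, sum_ite, sum_const_zero, zero_add, filter_ne, hrow, sum_sub_distrib, sum_const,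
    card_univ, Fintype.card_fin, nsmul_eq_mul]
  ring

lemma centering_eq {n : ℕ} (hn : 2 ≤ n) :
    centering n = (∑ i : Fin n, ∑ j ∈ univ.erase i,
      invOneAddSq (((i : ℕ) : ℤ) - ((j : ℕ) : ℤ)).natAbs) / (n * (n - 1)) := by
  have hn' : (2 : ℝ) ≤ n := by exact_mod_cast hn
  have hn0 : (n : ℝ) ≠ 0 := by positivity
  have hn1 : (n : ℝ) - 1 ≠ 0 := by linarith
  rw [centering, wOne_eq]
  field_simp
  ring

lemma centering_nonneg {n : ℕ} (hn : 2 ≤ n) : 0 ≤ centering n := by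
  have : (2 : ℝ) ≤ n := by exact_mod_cast hn
  rw [centering_eq hn]
  exact div_nonneg (sum_nonneg fun i _ => sum_nonneg fun j _ => invOneAddSq_nonneg _)
    (by nlinarith)

lemma sub_one_mul_centering_le {n : ℕ} (hn : 2 ≤ n) : ((n : ℝ) - 1) * centering n ≤ 5 := by
  have hn' : (2 : ℝ) ≤ n := by exact_mod_cast hn
  have hrows : ∑ i : Fin n, ∑ j ∈ univ.erase i,
      invOneAddSq (((i : ℕ) : ℤ) - ((j : ℕ) : ℤ)).natAbs ≤ 5 * n := by
    simpa [mul_comm] using sum_le_card_nsmul univ _ 5 fun i _ => sum_erase_invOneAddSq_dist_le i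
  rw [centering_eq hn, mul_div_assoc', div_le_iff₀ (by nlinarith)]
  nlinarith

lemma abs_wTilde_le {n : ℕ} (hn : 2 ≤ n) (i j : Fin n) :
    |wTilde n i j| ≤ invOneAddSq (((i : ℕ) : ℤ) - ((j : ℕ) : ℤ)).natAbs + centering n := by
  have hδ := centering_nonneg hn
  have hf := invOneAddSq_nonneg (((i : ℕ) : ℤ) - ((j : ℕ) : ℤ)).natAbs
  by_cases h : i = j
  · subst h
    have hii : wTilde n i i = 0 := by simp [wTilde, wDefault]
    rw [hii, abs_zero]
    positivity
  · rw [wTilde_of_ne h]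
    exact (abs_sub _ _).trans (by rw [abs_of_nonneg hf, abs_of_nonneg hδ])

lemma sum_abs_wTilde_le {n : ℕ} (hn : 2 ≤ n) (i : Fin n) : ∑ j, |wTilde n i j| ≤ 16 := by
  have hn' : (2 : ℝ) ≤ n := by exact_mod_cast hn
  have hδ := centering_nonneg hn
  have hnδ := sub_one_mul_centering_le hn
  calc ∑ j, |wTilde n i j|
      ≤ ∑ j : Fin n, (invOneAddSq (((i : ℕ) : ℤ) - ((j : ℕ) : ℤ)).natAbs + centering n) :=
        sum_le_sum fun j _ => abs_wTilde_le hn i j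
    _ = ∑ j : Fin n, invOneAddSq (((i : ℕ) : ℤ) - ((j : ℕ) : ℤ)).natAbs + n * centering n := by
        simp only [sum_add_distrib, sum_const, card_univ, Fintype.card_fin, nsmul_eq_mul]
    _ ≤ 16 := by nlinarith [sum_invOneAddSq_dist_le i]

lemma exists_natAbs_sub_eq_one {n : ℕ} (hn : 2 ≤ n) (i : Fin n) :
    ∃ j : Fin n, (((i : ℕ) : ℤ) - ((j : ℕ) : ℤ)).natAbs = 1 := by
  by_cases h : (i : ℕ) + 1 < n
  · exact ⟨⟨i + 1, h⟩, by simp⟩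
  · exact ⟨⟨i - 1, by omega⟩, by simp only; omega⟩

lemma exists_quarter_le_abs_wTilde {n : ℕ} (hn : 21 ≤ n) (i : Fin n) :
    ∃ j, 1 / 4 ≤ |wTilde n i j| := by
  have hn' : (21 : ℝ) ≤ n := by exact_mod_cast hn
  have hδ := centering_nonneg (by omega : 2 ≤ n)
  have hnδ := sub_one_mul_centering_le (by omega : 2 ≤ n)
  obtain ⟨j, hj⟩ := exists_natAbs_sub_eq_one (by omega) i
  have hij : i ≠ j := by rintro rfl; simp at hj
  refine ⟨j, le_abs.2 (Or.inl ?_)⟩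
  rw [wTilde_of_ne hij, hj, invOneAddSq_one]
  nlinarith

/-- for the default weight, the centered weight summaries satisfy
`w̃₀₊ ≍ w̃₁₊ ≍ 1` and `w̃₂₊ ≍ w̃₃₊ ≍ n`: there are constants `0 < c ≤ C` and an
integer `N` such that the stated two-sided bounds hold for all `n ≥ N`. -/
theorem centered_default_weight_orders :
    ∃ c C : ℝ, 0 < c ∧ c ≤ C ∧ ∃ N : ℕ, ∀ n : ℕ, N ≤ n →
      (c ≤ wZeroPlus n ∧ wZeroPlus n ≤ C) ∧
      (c ≤ wOnePlus n ∧ wOnePlus n ≤ C) ∧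
      (c * (n : ℝ) ≤ wTwoPlus n ∧ wTwoPlus n ≤ C * (n : ℝ)) ∧
      (c * (n : ℝ) ≤ wThreePlus n ∧ wThreePlus n ≤ C * (n : ℝ)) := by
  refine ⟨1 / 16, 256, by norm_num, by norm_num, 21, fun n hn => ?_⟩
  have : Nonempty (Fin n) := ⟨⟨0, by omega⟩⟩
  have hlow := exists_quarter_le_abs_wTilde hn
  have hrow := sum_abs_wTilde_le (by omega : 2 ≤ n)
  obtain ⟨j, hj⟩ := hlow ⟨0, by omega⟩
  have h0low : 1 / 4 ≤ wZeroPlus n := le_iSup_iSup_abs hj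
  have h0up : wZeroPlus n ≤ 16 := iSup_iSup_abs_le hrow
  have h1low : 1 / 4 ≤ wOnePlus n := le_iSup_sum_abs hj
  have h1up : wOnePlus n ≤ 16 := iSup_sum_abs_le hrow
  have h2low : (1 / 4) ^ 2 * (n : ℝ) ≤ wTwoPlus n := by
    simpa only [wTwoPlus, Fintype.card_fin] using sq_mul_card_le_sum_sum_sq (by norm_num) hlow
  have h2up : wTwoPlus n ≤ 16 ^ 2 * (n : ℝ) := by
    simpa only [wTwoPlus, Fintype.card_fin] using sum_sum_sq_le hrow
  have h3low : (1 / 4) ^ 2 * (n : ℝ) ≤ wThreePlus n := by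
    simpa only [wThreePlus, Fintype.card_fin] using sq_mul_card_le_sum_sq_sum_abs (by norm_num) hlow
  have h3up : wThreePlus n ≤ 16 ^ 2 * (n : ℝ) := by
    simpa only [wThreePlus, Fintype.card_fin] using sum_sq_sum_abs_le hrow
  refine ⟨⟨?_, ?_⟩, ⟨?_, ?_⟩, ⟨?_, ?_⟩, ⟨?_, ?_⟩⟩ <;> linarith
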